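/- Let ℓ ≥ 1 and let (ℓ, G, H, ⟨≺_H, σ_H⟩) be an instance of Stack Layout Extension with V(G) = V(H). If every missing edge e ∈ E_add satisfies |S(e)| ≥ m_add, where S(e) is the set of pages p ∈ {1,…,ℓ} such that ⟨≺_H, σ_H ∪ {(e,p)}⟩ is an ℓ-page stack layout of H together with the edge e, then G admits an ℓ-page stack layout extending ⟨≺_H, σ_H⟩. -/

import Mathlib

/-- Two edges `e` and `f` alternate (cross) with respect to the vertex position
function `pos`: `e = {a, c}` and `f = {b, d}` with `pos a < pos b < pos c < pos d`. -/
def EdgesCross {V : Type*} (pos : V → ℕ) (e f : Sym2 V) : Prop :=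
  ∃ a b c d : V, e = s(a, c) ∧ f = s(b, d) ∧ pos a < pos b ∧ pos b < pos c ∧ pos c < pos d

/-- `⟨pos, σ⟩` is an `ℓ`-page stack layout of the graph with vertex set `Vs` and
edge set `Es`: `pos` induces a linear order of `Vs` and no two edges assigned to a
common page alternate. -/
def IsStackLayout {V : Type*} (ℓ : ℕ) (Vs : Finset V) (Es : Finset (Sym2 V))
    (pos : V → ℕ) (σ : Sym2 V → Fin ℓ) : Prop :=
  Set.InjOn pos ↑Vs ∧ ∀ e ∈ Es, ∀ f ∈ Es, σ e = σ f → ¬ EdgesCross pos e f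

/-- `⟨posG, σG⟩` extends `⟨posH, σH⟩`: the linear order restricted to `VH` agrees with
the order induced by `posH`, and the page assignment restricted to `EH` equals `σH`. -/
def ExtendsLayout {V : Type*} {ℓ : ℕ} (VH : Finset V) (EH : Finset (Sym2 V))
    (posH : V → ℕ) (σH : Sym2 V → Fin ℓ) (posG : V → ℕ) (σG : Sym2 V → Fin ℓ) : Prop :=
  (∀ u ∈ VH, ∀ v ∈ VH, (posH u < posH v ↔ posG u < posG v)) ∧ ∀ e ∈ EH, σG e = σH e

/-! Give every missing edge a page of its own on which it crosses no edge of `H`. Such pages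
exist simultaneously for all missing edges by Hall's theorem: each edge has at least `m_add`
candidate pages, which is as many as there are missing edges. Two edges of `H` are fine by
assumption, an edge of `H` and a new edge by the choice of the page, and two new edges never
share a page. -/

open Function Finset

theorem exists_injective_forall_mem_of_card_le_ncard {ι α : Type*} [Finite ι] [Finite α]
    (t : ι → Set α) (h : ∀ i, Nat.card ι ≤ (t i).ncard) :
    ∃ f : ι → α, Injective f ∧ ∀ i, f i ∈ t i := by
  classical
  have := Fintype.ofFinite ι
  have := Fintype.ofFinite α
  have hall : ∀ s : Finset ι, #s ≤ #(s.biUnion fun i => (t i).toFinset) := by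
    intro s
    obtain rfl | ⟨i, hi⟩ := s.eq_empty_or_nonempty
    · simp
    calc #s ≤ Nat.card ι := by simpa [Nat.card_eq_fintype_card] using s.card_le_univ
      _ ≤ #(t i).toFinset := by simpa [Set.ncard_eq_toFinset_card'] using h i
      _ ≤ #(s.biUnion fun i => (t i).toFinset) :=
        card_le_card (subset_biUnion_of_mem (fun i => (t i).toFinset) hi)
  simpa using (all_card_le_biUnion_card_iff_exists_injective _).mp hall

theorem not_edgesCross_self {V : Type*} (pos : V → ℕ) (e : Sym2 V) : ¬ EdgesCross pos e e := by
  rintro ⟨a, b, c, d, rfl, he, hab, hbc, hcd⟩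
  rcases Sym2.eq_iff.mp he with ⟨rfl, rfl⟩ | ⟨rfl, rfl⟩ <;> omega

/-- The set `S(e)` of the paper, for the layout `⟨pos, σ⟩` of the edges `Es`. -/
def freePages {V : Type*} {ℓ : ℕ} (pos : V → ℕ) (σ : Sym2 V → Fin ℓ) (Es : Finset (Sym2 V))
    (e : Sym2 V) : Set (Fin ℓ) :=
  {p | ∀ f ∈ Es, σ f = p → ¬ EdgesCross pos e f ∧ ¬ EdgesCross pos f e}

theorem IsStackLayout.of_injOn_freePages {V : Type*} [DecidableEq V] {ℓ : ℕ} {Vs : Finset V}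
    {EH EG : Finset (Sym2 V)} {pos : V → ℕ} {σH σG : Sym2 V → Fin ℓ}
    (hH : IsStackLayout ℓ Vs EH pos σH) (hagree : ∀ e ∈ EH, σG e = σH e)
    (hinj : Set.InjOn σG ↑(EG \ EH)) (hfree : ∀ e ∈ EG \ EH, σG e ∈ freePages pos σH EH e) :
    IsStackLayout ℓ Vs EG pos σG := by
  refine ⟨hH.1, fun e he f hf hσ => ?_⟩
  by_cases heH : e ∈ EH <;> by_cases hfH : f ∈ EH
  · exact hH.2 e heH f hfH (by rw [← hagree e heH, ← hagree f hfH, hσ])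
  · exact (hfree f (mem_sdiff.mpr ⟨hf, hfH⟩) e heH (by rw [← hagree e heH, hσ])).2
  · exact (hfree e (mem_sdiff.mpr ⟨he, heH⟩) f hfH (by rw [← hagree f hfH, hσ])).1
  · obtain rfl : e = f := hinj (by simpa using ⟨he, heH⟩) (by simpa using ⟨hf, hfH⟩) hσ
    exact not_edgesCross_self pos e

theorem stmt1_general {V : Type*} [DecidableEq V] (ℓ : ℕ)
    (VH : Finset V) (EH EG : Finset (Sym2 V))
    (posH : V → ℕ) (σH : Sym2 V → Fin ℓ)
    (hH : IsStackLayout ℓ VH EH posH σH)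
    (hS : ∀ e ∈ EG, e ∉ EH → (EG \ EH).card ≤
      Set.ncard {p : Fin ℓ | ∀ f ∈ EH, σH f = p →
        ¬ EdgesCross posH e f ∧ ¬ EdgesCross posH f e}) :
    ∃ posG σG, IsStackLayout ℓ VH EG posG σG ∧ ExtendsLayout VH EH posH σH posG σG := by
  obtain ⟨φ, hφinj, hφfree⟩ := exists_injective_forall_mem_of_card_le_ncard
    (fun e : {e // e ∈ EG \ EH} => freePages posH σH EH e.1) fun e => by
      rw [Nat.card_eq_fintype_card, Fintype.card_coe]
      exact hS e.1 (mem_sdiff.mp e.2).1 (mem_sdiff.mp e.2).2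
  let σG e := if h : e ∈ EG \ EH then φ ⟨e, h⟩ else σH e
  have hagree : ∀ e ∈ EH, σG e = σH e := fun e he => by simp [σG, he]
  refine ⟨posH, σG, hH.of_injOn_freePages hagree ?_ ?_, fun _ _ _ _ => Iff.rfl, hagree⟩
  · intro e he f hf hσ
    rw [mem_coe] at he hf
    simp only [σG, dif_pos he, dif_pos hf] at hσ
    exact congrArg Subtype.val (hφinj hσ)
  · intro e he
    simp only [σG, dif_pos he]
    exact hφfree ⟨e, he⟩

/-- If `V(G) = V(H)` and every missing edge `e` satisfies
`|S(e)| ≥ m_add`, then `G` admits an `ℓ`-page stack layout extending `⟨≺_H, σ_H⟩`. -/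
theorem stmt1 {V : Type*} [DecidableEq V] (ℓ : ℕ) (hℓ : 1 ≤ ℓ)
    (VH : Finset V) (EH EG : Finset (Sym2 V)) (hEHG : EH ⊆ EG)
    (hEG : ∀ e ∈ EG, ∀ x ∈ e, x ∈ VH) (hsimple : ∀ e ∈ EG, ¬ e.IsDiag)
    (posH : V → ℕ) (σH : Sym2 V → Fin ℓ)
    (hH : IsStackLayout ℓ VH EH posH σH)
    (hS : ∀ e ∈ EG, e ∉ EH → (EG \ EH).card ≤
      Set.ncard {p : Fin ℓ | ∀ f ∈ EH, σH f = p →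
        ¬ EdgesCross posH e f ∧ ¬ EdgesCross posH f e}) :
    ∃ posG σG, IsStackLayout ℓ VH EG posG σG ∧ ExtendsLayout VH EH posH σH posG σG :=
  stmt1_general ℓ VH EH EG posH σH hH hS
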